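/- Let 0 < p < ∞ and let (f_n) be a sequence in L^p(ℝ^d) with limsup ‖f_n‖_{L^p} < ∞. If f_n → f almost everywhere, then ∫_{ℝ^d} | |f_n|^p − |f_n − f|^p − |f|^p | dx → 0 as n → ∞; in particular ‖f_n‖_{L^p}^p − ‖f_n − f‖_{L^p}^p → ‖f‖_{L^p}^p. -/

import Mathlib

/-! For every `ε > 0` there is `C_ε` with `|‖a + b‖^p - ‖a‖^p - ‖b‖^p| ≤ ε ‖a‖^p + C_ε ‖b‖^p`.
Take `a = fₙ - g`, `b = g`. The positive part of `|‖fₙ‖^p - ‖fₙ - g‖^p - ‖g‖^p| - ε ‖fₙ - g‖^p`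
is dominated by `C_ε ‖g‖^p`, which is integrable since `g ∈ L^p` by Fatou, and it tends to `0`
a.e., so its integral tends to `0`. What remains is at most `ε ∫ ‖fₙ - g‖^p`, and these integrals
are eventually bounded because `(fₙ)` is eventually bounded in `L^p`. Finally let `ε → 0`. -/

open MeasureTheory Filter Topology

theorem exists_rpow_add_le_one_add_mul_rpow_add_mul_rpow {p : ℝ} (hp : 0 < p) {ε : ℝ}
    (hε : 0 < ε) :
    ∃ C : ℝ, 0 ≤ C ∧ ∀ a b : ℝ, 0 ≤ a → 0 ≤ b → (a + b) ^ p ≤ (1 + ε) * a ^ p + C * b ^ p := by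
  -- Split according to whether `b ≤ δ a`, where `(1 + δ) ^ p = 1 + ε`.
  set δ : ℝ := (1 + ε) ^ p⁻¹ - 1 with hδ_def
  have hδ : 0 < δ := by
    rw [hδ_def, sub_pos]
    exact Real.one_lt_rpow (by linarith) (inv_pos.2 hp)
  have h1δ : (1 + δ) ^ p = 1 + ε := by
    rw [hδ_def, add_sub_cancel, Real.rpow_inv_rpow (by linarith) hp.ne']
  refine ⟨((1 + δ) / δ) ^ p, by positivity, fun a b ha hb => ?_⟩
  have hap : 0 ≤ a ^ p := Real.rpow_nonneg ha p
  have hbp : 0 ≤ b ^ p := Real.rpow_nonneg hb p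
  have hCp : 0 ≤ ((1 + δ) / δ) ^ p := by positivity
  rcases le_or_gt b (δ * a) with hba | hab
  · have : (a + b) ^ p ≤ ((1 + δ) * a) ^ p :=
      Real.rpow_le_rpow (by linarith) (by linarith) hp.le
    rw [Real.mul_rpow (by linarith) ha, h1δ] at this
    nlinarith
  · have : (a + b) ^ p ≤ ((1 + δ) / δ * b) ^ p := by
      refine Real.rpow_le_rpow (by linarith) ?_ hp.le
      rw [div_mul_eq_mul_div, le_div_iff₀ hδ]
      nlinarith
    rw [Real.mul_rpow (by positivity) hb] at this
    nlinarith

theorem exists_abs_norm_add_rpow_sub_norm_rpow_sub_norm_rpow_le {E : Type*}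
    [SeminormedAddCommGroup E] {p : ℝ} (hp : 0 < p) {ε : ℝ} (hε : 0 < ε) :
    ∃ C : ℝ, ∀ u v : E, |‖u + v‖ ^ p - ‖u‖ ^ p - ‖v‖ ^ p| ≤ ε * ‖u‖ ^ p + C * ‖v‖ ^ p := by
  obtain ⟨η, hη, hηε⟩ : ∃ η : ℝ, 0 < η ∧ η * (1 + η) ≤ ε :=
    ⟨min ε 1 / 2, by positivity,
      by nlinarith [min_le_left ε 1, min_le_right ε 1, lt_min hε one_pos]⟩
  obtain ⟨C, hC, hK⟩ := exists_rpow_add_le_one_add_mul_rpow_add_mul_rpow hp hη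
  refine ⟨η * C + C + 1, fun u v => ?_⟩
  have hup : 0 ≤ ‖u‖ ^ p := by positivity
  have hvp : 0 ≤ ‖v‖ ^ p := by positivity
  have hsum : ‖u + v‖ ^ p ≤ (1 + η) * ‖u‖ ^ p + C * ‖v‖ ^ p :=
    (Real.rpow_le_rpow (norm_nonneg _) (norm_add_le u v) hp.le).trans
      (hK _ _ (norm_nonneg _) (norm_nonneg _))
  have hu : ‖u‖ ^ p ≤ (1 + η) * ‖u + v‖ ^ p + C * ‖v‖ ^ p :=
    (Real.rpow_le_rpow (norm_nonneg _) (by simpa using norm_sub_le (u + v) v) hp.le).trans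
      (hK _ _ (norm_nonneg _) (norm_nonneg _))
  have hηu : η * ‖u‖ ^ p ≤ ε * ‖u‖ ^ p := by gcongr; nlinarith
  have hηCv : 0 ≤ η * C * ‖v‖ ^ p := by positivity
  rw [abs_le]
  constructor <;> nlinarith

theorem tendsto_norm_rpow_sub_norm_sub_rpow_sub_norm_rpow {ι E : Type*}
    [SeminormedAddCommGroup E] {l : Filter ι} {p : ℝ} (hp : 0 < p) {u : ι → E} {v : E}
    (h : Tendsto u l (𝓝 v)) :
    Tendsto (fun i => ‖u i‖ ^ p - ‖u i - v‖ ^ p - ‖v‖ ^ p) l (𝓝 0) := by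
  have hcont : Continuous fun w : E => ‖w‖ ^ p - ‖w - v‖ ^ p - ‖v‖ ^ p := by
    have := Real.continuous_rpow_const hp.le
    fun_prop
  simpa [Real.zero_rpow hp.ne', Function.comp_def] using (hcont.tendsto v).comp h

section

variable {α E ι : Type*} [MeasurableSpace α] {μ : Measure α} [NormedAddCommGroup E]
  {l : Filter ι} {p : ℝ}

theorem integral_norm_rpow_eq_toReal_eLpNorm_rpow (hp : 0 < p) {f : α → E}
    (hf : AEStronglyMeasurable f μ) :
    ∫ x, ‖f x‖ ^ p ∂μ = (eLpNorm f (.ofReal p) μ).toReal ^ p := by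
  rw [toReal_eLpNorm hf, lpNorm_eq_integral_norm_rpow_toReal (by simpa using hp)
    ENNReal.ofReal_ne_top hf, ENNReal.toReal_ofReal hp.le,
    Real.rpow_inv_rpow (integral_nonneg fun _ => by positivity) hp.ne']

theorem MeasureTheory.MemLp.integrable_norm_rpow_ofReal (hp : 0 < p) {f : α → E}
    (hf : MemLp f (.ofReal p) μ) : Integrable (fun x => ‖f x‖ ^ p) μ := by
  simpa [hp.le] using hf.integrable_norm_rpow (by simpa using hp) ENNReal.ofReal_ne_top

theorem isBoundedUnder_integral_norm_rpow (hp : 0 < p)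
    {f : ι → α → E} (hf : ∀ i, AEStronglyMeasurable (f i) μ) {B : ENNReal} (hB : B ≠ ⊤)
    (hfB : ∀ᶠ i in l, eLpNorm (f i) (.ofReal p) μ ≤ B) :
    IsBoundedUnder (· ≤ ·) l fun i => ∫ x, ‖f i x‖ ^ p ∂μ := by
  refine isBoundedUnder_of_eventually_le (a := B.toReal ^ p) (hfB.mono fun i hi => ?_)
  rw [integral_norm_rpow_eq_toReal_eLpNorm_rpow hp (hf i)]
  exact Real.rpow_le_rpow ENNReal.toReal_nonneg (ENNReal.toReal_mono hB hi) hp.le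

theorem tendsto_integral_abs_of_abs_le_eps_mul_add [l.IsCountablyGenerated]
    {F G : ι → α → ℝ} {H : α → ℝ}
    (hF : ∀ i, Integrable (F i) μ) (hG : ∀ i, Integrable (G i) μ) (hG₀ : ∀ i x, 0 ≤ G i x)
    (hH : Integrable H μ) (hG_bdd : IsBoundedUnder (· ≤ ·) l fun i => ∫ x, G i x ∂μ)
    (hdom : ∀ ε > 0, ∃ C : ℝ, ∀ i x, |F i x| ≤ ε * G i x + C * H x)
    (hlim : ∀ᵐ x ∂μ, Tendsto (fun i => F i x) l (𝓝 0)) :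
    Tendsto (fun i => ∫ x, |F i x| ∂μ) l (𝓝 0) := by
  obtain ⟨M, hM⟩ := hG_bdd
  replace hM : ∀ᶠ i in l, ∫ x, G i x ∂μ ≤ max M 1 :=
    (eventually_map.1 hM).mono fun i hi => hi.trans (le_max_left M 1)
  have hM₀ : 0 < max M 1 := lt_max_of_lt_right one_pos
  refine tendsto_order.2 ⟨fun a ha => .of_forall fun i =>
    ha.trans_le (integral_nonneg fun _ => abs_nonneg _), fun b hb => ?_⟩
  set ε := b / (2 * max M 1)
  have hε : 0 < ε := by positivity
  obtain ⟨C, hC⟩ := hdom ε hε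
  set W : ι → α → ℝ := fun i x => max (|F i x| - ε * G i x) 0
  have hW_int : ∀ i, Integrable (W i) μ := fun i => ((hF i).abs.sub ((hG i).const_mul ε)).pos_part
  have hW_bound : ∀ i x, ‖W i x‖ ≤ |C * H x| := fun i x => by
    rw [Real.norm_of_nonneg (le_max_right _ _)]
    exact max_le (by linarith [hC i x, le_abs_self (C * H x)]) (abs_nonneg _)
  have hW_le : ∀ i x, W i x ≤ |F i x| := fun i x =>
    max_le (by linarith [mul_nonneg hε.le (hG₀ i x)]) (abs_nonneg _)
  have hW_lim : Tendsto (fun i => ∫ x, W i x ∂μ) l (𝓝 0) := by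
    simpa using tendsto_integral_filter_of_dominated_convergence (f := fun _ => 0) _
      (.of_forall fun i => (hW_int i).aestronglyMeasurable)
      (.of_forall fun i => .of_forall (hW_bound i)) (hH.const_mul C).abs
      (hlim.mono fun x hx => squeeze_zero (fun i => le_max_right _ _) (fun i => hW_le i x)
        (by simpa using hx.abs))
  have hεM : ε * max M 1 = b / 2 := by
    simp only [ε]
    field_simp
  filter_upwards [hM, (tendsto_order.1 hW_lim).2 (b / 2) (by positivity)] with i hiM hiW
  calc ∫ x, |F i x| ∂μ ≤ ∫ x, (W i x + ε * G i x) ∂μ :=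
        integral_mono (hF i).abs ((hW_int i).add ((hG i).const_mul ε)) fun x => by
          linarith [le_max_left (|F i x| - ε * G i x) 0]
    _ = ∫ x, W i x ∂μ + ε * ∫ x, G i x ∂μ := by
        rw [integral_add (hW_int i) ((hG i).const_mul ε), integral_const_mul]
    _ < b / 2 + ε * max M 1 := add_lt_add_of_lt_of_le hiW (by gcongr)
    _ = b := by rw [hεM]; ring

theorem tendsto_integral_abs_norm_rpow_sub_norm_sub_rpow_sub_norm_rpow [l.IsCountablyGenerated]
    (hp : 0 < p) {f : ι → α → E} {g : α → E} (hf : ∀ i, MemLp (f i) (.ofReal p) μ)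
    (hg : MemLp g (.ofReal p) μ) {B : ENNReal} (hB : B ≠ ⊤)
    (hfB : ∀ᶠ i in l, eLpNorm (f i) (.ofReal p) μ ≤ B)
    (hlim : ∀ᵐ x ∂μ, Tendsto (fun i => f i x) l (𝓝 (g x))) :
    Tendsto (fun i => ∫ x, |‖f i x‖ ^ p - ‖f i x - g x‖ ^ p - ‖g x‖ ^ p| ∂μ) l (𝓝 0) := by
  have hdiff_bdd : IsBoundedUnder (· ≤ ·) l fun i => ∫ x, ‖f i x - g x‖ ^ p ∂μ :=
    isBoundedUnder_integral_norm_rpow hp (fun i => (hf i).1.sub hg.1)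
      (ENNReal.mul_ne_top (ENNReal.LpAddConst_lt_top _).ne (ENNReal.add_ne_top.2 ⟨hB, hg.2.ne⟩))
      (hfB.mono fun i hi => (eLpNorm_sub_le' (hf i).1 hg.1 _).trans (by gcongr))
  have hdiff_int : ∀ i, Integrable (fun x => ‖f i x - g x‖ ^ p) μ := fun i =>
    ((hf i).sub hg).integrable_norm_rpow_ofReal hp
  have hg_int := hg.integrable_norm_rpow_ofReal hp
  exact tendsto_integral_abs_of_abs_le_eps_mul_add
    (F := fun i x => ‖f i x‖ ^ p - ‖f i x - g x‖ ^ p - ‖g x‖ ^ p)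
    (fun i => (((hf i).integrable_norm_rpow_ofReal hp).sub (hdiff_int i)).sub hg_int)
    hdiff_int (fun _ _ => by positivity) hg_int hdiff_bdd
    (fun ε hε => (exists_abs_norm_add_rpow_sub_norm_rpow_sub_norm_rpow_le hp hε).imp
      fun C hC i x => by simpa using hC (f i x - g x) (g x))
    (hlim.mono fun x hx => tendsto_norm_rpow_sub_norm_sub_rpow_sub_norm_rpow hp hx)

theorem tendsto_integral_norm_rpow_sub_integral_norm_sub_rpow (hp : 0 < p) {f : ι → α → E}
    {g : α → E} (hf : ∀ i, MemLp (f i) (.ofReal p) μ) (hg : MemLp g (.ofReal p) μ)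
    (h : Tendsto (fun i => ∫ x, |‖f i x‖ ^ p - ‖f i x - g x‖ ^ p - ‖g x‖ ^ p| ∂μ) l (𝓝 0)) :
    Tendsto (fun i => (∫ x, ‖f i x‖ ^ p ∂μ) - ∫ x, ‖f i x - g x‖ ^ p ∂μ) l
      (𝓝 (∫ x, ‖g x‖ ^ p ∂μ)) := by
  have hsplit : ∀ i, (∫ x, ‖f i x‖ ^ p ∂μ) - (∫ x, ‖f i x - g x‖ ^ p ∂μ) - ∫ x, ‖g x‖ ^ p ∂μ
      = ∫ x, (‖f i x‖ ^ p - ‖f i x - g x‖ ^ p - ‖g x‖ ^ p) ∂μ := fun i => by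
    have hf_int := (hf i).integrable_norm_rpow_ofReal hp
    have hdiff_int : Integrable (fun x => ‖f i x - g x‖ ^ p) μ :=
      ((hf i).sub hg).integrable_norm_rpow_ofReal hp
    have hsub : Integrable (fun x => ‖f i x‖ ^ p - ‖f i x - g x‖ ^ p) μ := hf_int.sub hdiff_int
    rw [← integral_sub hf_int hdiff_int, ← integral_sub hsub (hg.integrable_norm_rpow_ofReal hp)]
  have := squeeze_zero_norm (fun i => hsplit i ▸ norm_integral_le_integral_norm _) h
  simpa using this.add_const (∫ x, ‖g x‖ ^ p ∂μ)

end

/-- **Refined Fatou lemma (Brezis–Lieb)**: if `0 < p < ∞`, `(fₙ)` is a sequence in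
`L^p(ℝ^d)` with `limsup ‖fₙ‖_{L^p} < ∞` and `fₙ → g` almost everywhere, then
`∫ ||fₙ|^p − |fₙ − g|^p − |g|^p| → 0`, and in particular
`‖fₙ‖_{L^p}^p − ‖fₙ − g‖_{L^p}^p → ‖g‖_{L^p}^p`. -/
theorem brezis_lieb_refined_fatou (d : ℕ) (p : ℝ) (hp : 0 < p)
    (f : ℕ → (Fin d → ℝ) → ℂ) (g : (Fin d → ℝ) → ℂ)
    (hf : ∀ n, MemLp (f n) (ENNReal.ofReal p) volume)
    (hg : AEStronglyMeasurable g volume)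
    (hbdd : limsup (fun n => eLpNorm (f n) (ENNReal.ofReal p) volume) atTop < ⊤)
    (hae : ∀ᵐ x : (Fin d → ℝ) ∂volume, Tendsto (fun n => f n x) atTop (nhds (g x))) :
    Tendsto (fun n => ∫ x : (Fin d → ℝ),
        |‖f n x‖ ^ p - ‖f n x - g x‖ ^ p - ‖g x‖ ^ p|) atTop (nhds 0)
    ∧ Tendsto (fun n => (∫ x : (Fin d → ℝ), ‖f n x‖ ^ p)
        - ∫ x : (Fin d → ℝ), ‖f n x - g x‖ ^ p) atTop
        (nhds (∫ x : (Fin d → ℝ), ‖g x‖ ^ p)) := by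
  obtain ⟨B, hB, hB_top⟩ := exists_between hbdd
  have hfB : ∀ᶠ n in atTop, eLpNorm (f n) (.ofReal p) volume ≤ B :=
    (eventually_lt_of_limsup_lt hB).mono fun _ => le_of_lt
  have hgLp : MemLp g (.ofReal p) volume :=
    ⟨hg, (Lp.eLpNorm_le_of_ae_tendsto hfB (fun n => (hf n).1) hae).trans_lt hB_top⟩
  have hdefect := tendsto_integral_abs_norm_rpow_sub_norm_sub_rpow_sub_norm_rpow hp hf hgLp
    hB_top.ne hfB hae
  exact ⟨hdefect, tendsto_integral_norm_rpow_sub_integral_norm_sub_rpow hp hf hgLp hdefect⟩
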